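/- Let Γ be a group and x, y ∈ Γ. Then in the real group algebra ℝ[Γ] the element 2(1−x)*(1−x) + 2(1−y)*(1−y) − (1−xy)*(1−xy) belongs to Σ²I[Γ]; indeed, it equals η*η where η = (1−x) − x(1−y) ∈ I[Γ]. -/

import Mathlib

open MonoidAlgebra Finset RealInnerProductSpace

/-- The involution `ξ*(x) = ξ(x⁻¹)` on the real group algebra `ℝ[Γ]`. -/
def astar {Γ : Type*} [Group Γ] (ξ : MonoidAlgebra ℝ Γ) : MonoidAlgebra ℝ Γ :=
  MonoidAlgebra.ofCoeff (Finsupp.equivMapDomain (Equiv.inv Γ) ξ.coeff)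

/-- The augmentation character `ℝ[Γ] → ℝ`, `ξ ↦ Σ_x ξ(x)`. -/
noncomputable def aug (Γ : Type*) [Group Γ] : MonoidAlgebra ℝ Γ →ₐ[ℝ] ℝ :=
  MonoidAlgebra.lift ℝ ℝ Γ 1

/-- The augmentation ideal `I[Γ] = {ξ ∈ ℝ[Γ] : Σ_x ξ(x) = 0}`, as an `ℝ`-submodule. -/
noncomputable def augIdeal (Γ : Type*) [Group Γ] : Submodule ℝ (MonoidAlgebra ℝ Γ) :=
  LinearMap.ker (aug Γ).toLinearMap

/-- `Σ²ℝ[Γ]`, the set of finite sums of hermitian squares in `ℝ[Γ]`. -/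
def SOS (Γ : Type*) [Group Γ] : Set (MonoidAlgebra ℝ Γ) :=
  {ξ | ∃ (n : ℕ) (f : Fin n → MonoidAlgebra ℝ Γ), ξ = ∑ i, astar (f i) * f i}

/-- `Σ²I[Γ]`, the set of finite sums of hermitian squares of elements of `I[Γ]`. -/
def SOSI (Γ : Type*) [Group Γ] : Set (MonoidAlgebra ℝ Γ) :=
  {ξ | ∃ (n : ℕ) (f : Fin n → MonoidAlgebra ℝ Γ),
    (∀ i, f i ∈ augIdeal Γ) ∧ ξ = ∑ i, astar (f i) * f i}

/-!
Since `(of g)* = of g⁻¹`, the identity is an instance of a ring identity that only uses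
`a' * a = 1` and `b' * b = 1`, with `a = x`, `b = y`, `a' = x*`, `b' = y*`. The element
`η = (1 - x) - x(1 - y)` lies in `I[Γ]` because `I[Γ]` is the kernel of a ring homomorphism
and contains every `1 - g`.
-/

theorem two_mul_add_two_mul_sub_eq_of_mul_eq_one {A : Type*} [Ring A] {a a' b b' : A}
    (ha : a' * a = 1) (hb : b' * b = 1) :
    2 * ((1 - a') * (1 - a)) + 2 * ((1 - b') * (1 - b)) - (1 - b' * a') * (1 - a * b)
      = ((1 - a') - (1 - b') * a') * ((1 - a) - a * (1 - b)) := by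
  have hab : a' * (a * b) = b := by rw [← mul_assoc, ha, one_mul]
  noncomm_ring
  rw [ha, hb, hab, hb]
  noncomm_ring

section Involution

variable {Γ : Type*} [Group Γ]

lemma astar_sub (ξ ζ : MonoidAlgebra ℝ Γ) : astar (ξ - ζ) = astar ξ - astar ζ :=
  congrArg MonoidAlgebra.ofCoeff
    (map_sub (Finsupp.domLCongr (R := ℝ) (M := ℝ) (Equiv.inv Γ)) ξ.coeff ζ.coeff)

lemma astar_single (g : Γ) (r : ℝ) : astar (single g r) = single g⁻¹ r := by
  rw [astar, coeff_single, Finsupp.equivMapDomain_single]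
  rfl

lemma astar_of (g : Γ) : astar (of ℝ Γ g) = of ℝ Γ g⁻¹ := by
  rw [of_apply, astar_single, of_apply]

lemma astar_one : astar (1 : MonoidAlgebra ℝ Γ) = 1 := by
  rw [← map_one (of ℝ Γ), astar_of, inv_one]

lemma astar_one_sub_of (g : Γ) : astar (1 - of ℝ Γ g) = 1 - of ℝ Γ g⁻¹ := by
  rw [astar_sub, astar_one, astar_of]

lemma astar_of_mul_one_sub_of (g h : Γ) :
    astar (of ℝ Γ g * (1 - of ℝ Γ h)) = (1 - of ℝ Γ h⁻¹) * of ℝ Γ g⁻¹ := by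
  rw [mul_sub, mul_one, ← map_mul, astar_sub, astar_of, astar_of, mul_inv_rev, map_mul, sub_mul,
    one_mul]

end Involution

section Augmentation

variable {Γ : Type*} [Group Γ]

lemma mem_augIdeal_iff {ξ : MonoidAlgebra ℝ Γ} : ξ ∈ augIdeal Γ ↔ aug Γ ξ = 0 :=
  Iff.rfl

lemma one_sub_of_mem_augIdeal (g : Γ) : 1 - of ℝ Γ g ∈ augIdeal Γ := by
  simp [mem_augIdeal_iff, aug]

lemma mul_mem_augIdeal (ξ : MonoidAlgebra ℝ Γ) {ζ : MonoidAlgebra ℝ Γ} (hζ : ζ ∈ augIdeal Γ) :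
    ξ * ζ ∈ augIdeal Γ := by
  rw [mem_augIdeal_iff] at hζ ⊢
  rw [map_mul, hζ, mul_zero]

lemma astar_mul_self_mem_SOSI {η : MonoidAlgebra ℝ Γ} (hη : η ∈ augIdeal Γ) :
    astar η * η ∈ SOSI Γ :=
  ⟨1, fun _ => η, fun _ => hη, by simp⟩

end Augmentation

/-- the parallelogram-type identity
`2(1-x)*(1-x) + 2(1-y)*(1-y) - (1-xy)*(1-xy) = η*η` with `η = (1-x) - x(1-y) ∈ I[Γ]`. -/
theorem stmt9 {Γ : Type*} [Group Γ] (x y : Γ) :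
    ((2 : ℝ) • (astar (1 - of ℝ Γ x) * (1 - of ℝ Γ x))
        + (2 : ℝ) • (astar (1 - of ℝ Γ y) * (1 - of ℝ Γ y))
        - astar (1 - of ℝ Γ (x * y)) * (1 - of ℝ Γ (x * y))
      = astar ((1 - of ℝ Γ x) - of ℝ Γ x * (1 - of ℝ Γ y))
          * ((1 - of ℝ Γ x) - of ℝ Γ x * (1 - of ℝ Γ y))) ∧
    ((1 - of ℝ Γ x) - of ℝ Γ x * (1 - of ℝ Γ y) ∈ augIdeal Γ) ∧
    ((2 : ℝ) • (astar (1 - of ℝ Γ x) * (1 - of ℝ Γ x))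
        + (2 : ℝ) • (astar (1 - of ℝ Γ y) * (1 - of ℝ Γ y))
        - astar (1 - of ℝ Γ (x * y)) * (1 - of ℝ Γ (x * y)) ∈ SOSI Γ) := by
  have inv_mul_of (g : Γ) : of ℝ Γ g⁻¹ * of ℝ Γ g = 1 := by
    rw [← map_mul, inv_mul_cancel, map_one]
  have hη : (1 - of ℝ Γ x) - of ℝ Γ x * (1 - of ℝ Γ y) ∈ augIdeal Γ :=
    sub_mem (one_sub_of_mem_augIdeal x) (mul_mem_augIdeal _ (one_sub_of_mem_augIdeal y))
  have heq : (2 : ℝ) • (astar (1 - of ℝ Γ x) * (1 - of ℝ Γ x))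
        + (2 : ℝ) • (astar (1 - of ℝ Γ y) * (1 - of ℝ Γ y))
        - astar (1 - of ℝ Γ (x * y)) * (1 - of ℝ Γ (x * y))
      = astar ((1 - of ℝ Γ x) - of ℝ Γ x * (1 - of ℝ Γ y))
          * ((1 - of ℝ Γ x) - of ℝ Γ x * (1 - of ℝ Γ y)) := by
    rw [astar_sub (1 - of ℝ Γ x), astar_of_mul_one_sub_of, astar_one_sub_of, astar_one_sub_of,
      astar_one_sub_of, mul_inv_rev, map_mul, map_mul, two_smul, two_smul, ← two_mul, ← two_mul]
    exact two_mul_add_two_mul_sub_eq_of_mul_eq_one (inv_mul_of x) (inv_mul_of y)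
  exact ⟨heq, hη, heq ▸ astar_mul_self_mem_SOSI hη⟩
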